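/- Let O be an ALCHOIF ontology, Σ a set of concept and role names, Σ' the set of role names in Σ, A a fresh concept name not occurring in O, and O' = O ∪ {⊤ ⊑ ∀r.A, ⊤ ⊑ ∀r⁻.A : r ∈ Σ'}. Then (O,Σ) is a positive instance of MIXED-SAT if and only if (O', {A} ∪ (Σ ∖ Σ')) is a positive instance of MIXED-SAT. -/
import Mathlib


namespace DLPaper

/-- Constants. -/
abbrev Const := ℕ

/-- Atoms over concept names (unary) and role names (binary). -/
inductive Atom where
  | conceptAtom (A : ℕ) (c : Const)
  | roleAtom (r : ℕ) (c d : Const)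
deriving DecidableEq

/-- A (database) instance is a set of atoms. -/
abbrev Instance := Set Atom

/-- Active domain of an instance. -/
def adom (I : Instance) : Set Const :=
  {c | (∃ A, Atom.conceptAtom A c ∈ I) ∨ (∃ r d, Atom.roleAtom r c d ∈ I) ∨
       (∃ r d, Atom.roleAtom r d c ∈ I)}

/-- Roles: role names and their inverses. -/
inductive Role where
  | name (r : ℕ)
  | inv (r : ℕ)
deriving DecidableEq

def Role.interp (I : Instance) : Role → Set (Const × Const)
  | .name r => {p | Atom.roleAtom r p.1 p.2 ∈ I}
  | .inv r => {p | Atom.roleAtom r p.2 p.1 ∈ I}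

/-- The inverse of a role. -/
def Role.invr : Role → Role
  | .name r => .inv r
  | .inv r => .name r

/-- ALCHOIF concepts. -/
inductive Concept where
  | atomic (A : ℕ)
  | top
  | bot
  | nominal (c : Const)
  | neg (C : Concept)
  | inter (C D : Concept)
  | union (C D : Concept)
  | ex (p : Role) (C : Concept)
  | all (p : Role) (C : Concept)
deriving DecidableEq

def Concept.interp (I : Instance) : Concept → Set Const
  | .atomic A => {c | Atom.conceptAtom A c ∈ I}
  | .top => adom I
  | .bot => ∅
  | .nominal c => {c}
  | .neg C => adom I \ C.interp I
  | .inter C D => C.interp I ∩ D.interp I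
  | .union C D => C.interp I ∪ D.interp I
  | .ex p C => {c | ∃ d, (c, d) ∈ p.interp I ∧ d ∈ C.interp I}
  | .all p C => {c | c ∈ adom I ∧ ∀ d, (c, d) ∈ p.interp I → d ∈ C.interp I}

/-- ALCHOIF axioms: concept inclusions, role inclusions, functionality assertions. -/
inductive Axiom where
  | conceptIncl (C D : Concept)
  | roleIncl (p q : Role)
  | funcAssert (p : Role)
deriving DecidableEq

/-- An ontology is a finite set of axioms. -/
abbrev Ontology := Finset Axiom

def satisfiesAxiom (I : Instance) : Axiom → Prop
  | .conceptIncl C D => C.interp I ⊆ D.interp I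
  | .roleIncl p q => p.interp I ⊆ q.interp I
  | .funcAssert p => ∀ c d₁ d₂, (c, d₁) ∈ p.interp I → (c, d₂) ∈ p.interp I → d₁ = d₂

def isModel (I : Instance) (O : Ontology) : Prop := ∀ a ∈ O, satisfiesAxiom I a

/-- ALCHOI ontologies: no functionality assertions. -/
def NoFunc (O : Ontology) : Prop := ∀ p, Axiom.funcAssert p ∉ O

/-! ### Conjunctive queries -/

inductive Term where
  | var (v : ℕ)
  | const (c : Const)
deriving DecidableEq

inductive CQAtom where
  | conceptAtom (A : ℕ) (t : Term)
  | roleAtom (r : ℕ) (t u : Term)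
deriving DecidableEq

/-- A conjunctive query: a list of answer variables and a conjunction of atoms;
all other variables are existentially quantified. -/
structure CQ where
  answerVars : List ℕ
  atoms : List CQAtom
deriving DecidableEq

def Term.eval (v : ℕ → Const) : Term → Const
  | .var x => v x
  | .const c => c

def CQAtom.holds (I : Instance) (v : ℕ → Const) : CQAtom → Prop
  | .conceptAtom A t => Atom.conceptAtom A (t.eval v) ∈ I
  | .roleAtom r t u => Atom.roleAtom r (t.eval v) (u.eval v) ∈ I

/-- Answers of a CQ over an instance. -/
def cqAns (I : Instance) (q : CQ) : Set (List Const) :=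
  {t | ∃ v : ℕ → Const, (∀ a ∈ q.atoms, a.holds I v) ∧ t = q.answerVars.map v}

/-- A Boolean query holds in `I`. -/
def cqHolds (I : Instance) (q : CQ) : Prop := [] ∈ cqAns I q

/-- Certain answers of a query w.r.t. an ontology and an instance. -/
def certainAns (O : Ontology) (I : Instance) (q : CQ) : Set (List Const) :=
  {t | ∀ J : Instance, I ⊆ J → isModel J O → t ∈ cqAns J q}

/-- `CWA O I Q`. -/
def cwa (O : Ontology) (I : Instance) (Q : Set CQ) : Set Instance :=
  {J | I ⊆ J ∧ isModel J O ∧ ∀ q ∈ Q, cqAns I q = cqAns J q}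

/-- `FIX O I Q`. -/
def fixSet (O : Ontology) (I : Instance) (Q : Set CQ) : Set Instance :=
  {J | I ⊆ J ∧ isModel J O ∧ ∀ q ∈ Q, cqAns J q = certainAns O ∅ q}

/-- An instance over a signature given as a set of concept names and a set of role names. -/
def instanceOver (Sc Sr : Set ℕ) (I : Instance) : Prop :=
  ∀ a ∈ I, match a with
    | Atom.conceptAtom A _ => A ∈ Sc
    | Atom.roleAtom r _ _ => r ∈ Sr

/-- `MOD O F I` for a focusing configuration `F = (Σ, Qcwa, Qfix, Qdet)`. -/
def modSet (O : Ontology) (Qcwa Qfix : Set CQ) (I : Instance) : Set Instance :=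
  cwa O I Qcwa ∩ fixSet O I Qfix

/-- Focusing solutions. -/
def IsFocusingSolution (O : Ontology) (Sc Sr : Set ℕ) (Qcwa Qfix Qdet : Set CQ) : Prop :=
  ∀ I : Instance, I.Finite → instanceOver Sc Sr I →
    ((cwa O I Qcwa).Nonempty → (modSet O Qcwa Qfix I).Nonempty) ∧
    (∀ J₁ ∈ modSet O Qcwa Qfix I, ∀ J₂ ∈ modSet O Qcwa Qfix I,
      ∀ q ∈ Qdet, cqAns J₁ q = cqAns J₂ q)

end DLPaper
namespace DLPaper

/-- Simple concepts: concept names, ⊤, ⊥, and nominals. -/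
def IsSimple : Concept → Prop
  | .atomic _ => True
  | .top => True
  | .bot => True
  | .nominal _ => True
  | _ => False

inductive IsConjOfSimple : Concept → Prop
  | simple {C} : IsSimple C → IsConjOfSimple C
  | inter {C D} : IsConjOfSimple C → IsConjOfSimple D → IsConjOfSimple (C.inter D)

inductive IsDisjOfSimple : Concept → Prop
  | simple {C} : IsSimple C → IsDisjOfSimple C
  | union {C D} : IsDisjOfSimple C → IsDisjOfSimple D → IsDisjOfSimple (C.union D)

/-- Shapes of axioms in normal form. -/
def AxInNormalForm : Axiom → Prop
  | .conceptIncl C D =>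
      (IsConjOfSimple C ∧ IsDisjOfSimple D) ∨
      (∃ r B, IsSimple C ∧ IsSimple B ∧ D = Concept.ex r B) ∨
      (∃ r B, IsSimple C ∧ IsSimple B ∧ D = Concept.all r B)
  | .roleIncl _ _ => True
  | .funcAssert _ => True

def InNormalForm (O : Ontology) : Prop := ∀ a ∈ O, AxInNormalForm a

def Concept.conceptNames : Concept → Set ℕ
  | .atomic A => {A}
  | .top => ∅
  | .bot => ∅
  | .nominal _ => ∅
  | .neg C => C.conceptNames
  | .inter C D => C.conceptNames ∪ D.conceptNames
  | .union C D => C.conceptNames ∪ D.conceptNames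
  | .ex _ C => C.conceptNames
  | .all _ C => C.conceptNames

def Axiom.conceptNames : Axiom → Set ℕ
  | .conceptIncl C D => C.conceptNames ∪ D.conceptNames
  | _ => ∅

/-- The concept names occurring in an ontology. -/
def ontConceptNames (O : Ontology) : Set ℕ := ⋃ a ∈ O, a.conceptNames

def Role.nameOf : Role → ℕ
  | .name r => r
  | .inv r => r

def Concept.roleNames : Concept → Set ℕ
  | .atomic _ => ∅
  | .top => ∅
  | .bot => ∅
  | .nominal _ => ∅
  | .neg C => C.roleNames
  | .inter C D => C.roleNames ∪ D.roleNames
  | .union C D => C.roleNames ∪ D.roleNames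
  | .ex p C => {p.nameOf} ∪ C.roleNames
  | .all p C => {p.nameOf} ∪ C.roleNames

def Axiom.roleNames : Axiom → Set ℕ
  | .conceptIncl C D => C.roleNames ∪ D.roleNames
  | .roleIncl p q => {p.nameOf, q.nameOf}
  | .funcAssert p => {p.nameOf}

/-- The role names occurring in an ontology. -/
def ontRoleNames (O : Ontology) : Set ℕ := ⋃ a ∈ O, a.roleNames

/-- `N_R^+(O)`: the role names of `O` and their inverses. -/
def rolesOf (O : Ontology) : Set Role := {p | p.nameOf ∈ ontRoleNames O}

def Concept.simpleSubs : Concept → Set Concept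
  | .atomic A => {.atomic A}
  | .top => {.top}
  | .bot => {.bot}
  | .nominal c => {.nominal c}
  | .neg C => C.simpleSubs
  | .inter C D => C.simpleSubs ∪ D.simpleSubs
  | .union C D => C.simpleSubs ∪ D.simpleSubs
  | .ex _ C => C.simpleSubs
  | .all _ C => C.simpleSubs

def Axiom.simpleSubs : Axiom → Set Concept
  | .conceptIncl C D => C.simpleSubs ∪ D.simpleSubs
  | _ => ∅

/-- `N_C^+(O)`: the simple concepts occurring in `O` (together with ⊤). -/
def simpleConceptsOf (O : Ontology) : Set Concept :=
  insert Concept.top (⋃ a ∈ O, a.simpleSubs)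

end DLPaper

namespace DLPaper

/-- `(O, Σ)` is a positive instance of MIXED-SAT, where the signature `Σ` is given by
its concept-name part `Sc` and role-name part `Sr`. -/
def mixedSat (O : Ontology) (Sc Sr : Set ℕ) : Prop :=
  ∃ J : Instance, isModel J O ∧
    (∀ A ∈ Sc, ((Concept.atomic A).interp J).Finite) ∧
    (∀ r ∈ Sr, ((Role.name r).interp J).Finite)

/-! ### Auxiliary material for Statement 8 -/

/-- The transformed instance: drop all `A`-atoms, add `A`-atoms over `S`,
and add `ρ`-loops over the active domain (to preserve the active domain). -/
def tr (J : Instance) (A ρ : ℕ) (S : Set Const) : Instance :=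
  {a ∈ J | ∀ c, a ≠ Atom.conceptAtom A c} ∪ ((fun c => Atom.conceptAtom A c) '' S)
    ∪ ((fun c => Atom.roleAtom ρ c c) '' adom J)

lemma mem_tr_concept {J : Instance} {A ρ : ℕ} {S : Set Const} (B : ℕ) (c : Const) :
    Atom.conceptAtom B c ∈ tr J A ρ S ↔
      ((Atom.conceptAtom B c ∈ J ∧ B ≠ A) ∨ (B = A ∧ c ∈ S)) := by
  simp only [tr, Set.mem_union, Set.mem_setOf_eq, Set.mem_image, Set.mem_sep_iff]
  constructor
  · rintro ((⟨h1, h2⟩ | ⟨x, hx, hEq⟩) | ⟨x, hx, hEq⟩)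
    · by_cases hBA : B = A
      · exact absurd rfl (by subst hBA; exact (h2 c))
      · exact Or.inl ⟨h1, hBA⟩
    · cases hEq; exact Or.inr ⟨rfl, hx⟩
    · cases hEq
  · rintro (⟨h1, h2⟩ | ⟨rfl, hc⟩)
    · exact Or.inl (Or.inl ⟨h1, fun d hd => h2 (by injection hd)⟩)
    · exact Or.inl (Or.inr ⟨c, hc, rfl⟩)

lemma mem_tr_role {J : Instance} {A ρ : ℕ} {S : Set Const} (r : ℕ) (c d : Const) :
    Atom.roleAtom r c d ∈ tr J A ρ S ↔
      (Atom.roleAtom r c d ∈ J ∨ (r = ρ ∧ d = c ∧ c ∈ adom J)) := by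
  simp only [tr, Set.mem_union, Set.mem_setOf_eq, Set.mem_image, Set.mem_sep_iff]
  constructor
  · rintro ((⟨h1, _⟩ | ⟨x, hx, hEq⟩) | ⟨x, hx, hEq⟩)
    · exact Or.inl h1
    · cases hEq
    · injection hEq with h1 h2 h3; subst h1; subst h2; subst h3
      exact Or.inr ⟨rfl, rfl, hx⟩
  · rintro (h | ⟨rfl, rfl, hc⟩)
    · exact Or.inl (Or.inl ⟨h, fun x hx => by cases hx⟩)
    · exact Or.inr ⟨_, hc, rfl⟩

lemma adom_tr {J : Instance} {A ρ : ℕ} {S : Set Const} (hS : S ⊆ adom J) :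
    adom (tr J A ρ S) = adom J := by
  ext c
  constructor
  · rintro (⟨B, hB⟩ | ⟨r, d, hr⟩ | ⟨r, d, hr⟩)
    · rcases (mem_tr_concept B c).1 hB with ⟨h, _⟩ | ⟨_, hc⟩
      · exact Or.inl ⟨B, h⟩
      · exact hS hc
    · rcases (mem_tr_role r c d).1 hr with h | ⟨_, _, h⟩
      · exact Or.inr (Or.inl ⟨r, d, h⟩)
      · exact h
    · rcases (mem_tr_role r d c).1 hr with h | ⟨_, hdc, h⟩
      · exact Or.inr (Or.inr ⟨r, d, h⟩)
      · subst hdc; exact h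
  · intro hc
    exact Or.inr (Or.inl ⟨ρ, c, (mem_tr_role ρ c c).2 (Or.inr ⟨rfl, rfl, hc⟩)⟩)

lemma roleInterp_tr {J : Instance} {A ρ : ℕ} {S : Set Const} {p : Role}
    (hp : p.nameOf ≠ ρ) : p.interp (tr J A ρ S) = p.interp J := by
  cases p with
  | name r =>
      ext ⟨c, d⟩
      simp only [Role.interp, Set.mem_setOf_eq, mem_tr_role]
      exact ⟨fun h => h.resolve_right (fun h' => hp h'.1), Or.inl⟩
  | inv r =>
      ext ⟨c, d⟩
      simp only [Role.interp, Set.mem_setOf_eq, mem_tr_role]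
      exact ⟨fun h => h.resolve_right (fun h' => hp h'.1), Or.inl⟩

lemma interp_tr {J : Instance} {A ρ : ℕ} {S : Set Const} (hS : S ⊆ adom J) :
    ∀ C : Concept, A ∉ C.conceptNames → ρ ∉ C.roleNames →
      C.interp (tr J A ρ S) = C.interp J := by
  intro C
  induction C with
  | atomic B =>
      intro hAc _
      have hBA : B ≠ A := fun h => hAc (by simp [Concept.conceptNames, h])
      ext c
      simp only [Concept.interp, Set.mem_setOf_eq, mem_tr_concept]
      constructor
      · rintro (⟨h, _⟩ | ⟨h, _⟩)
        · exact h
        · exact absurd h hBA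
      · intro h; exact Or.inl ⟨h, hBA⟩
  | top => intro _ _; exact adom_tr hS
  | bot => intro _ _; rfl
  | nominal c => intro _ _; rfl
  | neg C ih =>
      intro hAc hρ
      simp only [Concept.interp, adom_tr hS,
        ih (by simpa [Concept.conceptNames] using hAc) (by simpa [Concept.roleNames] using hρ)]
  | inter C D ihC ihD =>
      intro hAc hρ
      simp only [Concept.conceptNames, Concept.roleNames, Set.mem_union, not_or] at hAc hρ
      simp only [Concept.interp, ihC hAc.1 hρ.1, ihD hAc.2 hρ.2]
  | union C D ihC ihD =>
      intro hAc hρ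
      simp only [Concept.conceptNames, Concept.roleNames, Set.mem_union, not_or] at hAc hρ
      simp only [Concept.interp, ihC hAc.1 hρ.1, ihD hAc.2 hρ.2]
  | ex p C ih =>
      intro hAc hρ
      simp only [Concept.conceptNames, Concept.roleNames, Set.mem_union, not_or,
        Set.mem_singleton_iff] at hAc hρ
      simp only [Concept.interp, roleInterp_tr (Ne.symm hρ.1), ih hAc hρ.2]
  | all p C ih =>
      intro hAc hρ
      simp only [Concept.conceptNames, Concept.roleNames, Set.mem_union, not_or,
        Set.mem_singleton_iff] at hAc hρ
      simp only [Concept.interp, adom_tr hS, roleInterp_tr (Ne.symm hρ.1), ih hAc hρ.2]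

lemma satAx_tr {J : Instance} {A ρ : ℕ} {S : Set Const} (hS : S ⊆ adom J)
    (a : Axiom) (hAc : A ∉ a.conceptNames) (hρ : ρ ∉ a.roleNames) :
    satisfiesAxiom (tr J A ρ S) a ↔ satisfiesAxiom J a := by
  cases a with
  | conceptIncl C D =>
      simp only [Axiom.conceptNames, Axiom.roleNames, Set.mem_union, not_or] at hAc hρ
      simp only [satisfiesAxiom, interp_tr hS C hAc.1 hρ.1, interp_tr hS D hAc.2 hρ.2]
  | roleIncl p q =>
      simp only [Axiom.roleNames, Set.mem_insert_iff, Set.mem_singleton_iff, not_or] at hρ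
      simp only [satisfiesAxiom, roleInterp_tr (Ne.symm hρ.1), roleInterp_tr (Ne.symm hρ.2)]
  | funcAssert p =>
      simp only [Axiom.roleNames, Set.mem_singleton_iff] at hρ
      simp only [satisfiesAxiom, roleInterp_tr (Ne.symm hρ)]

lemma Concept.roleNames_finite (C : Concept) : C.roleNames.Finite := by
  induction C with
  | atomic A => exact Set.finite_empty
  | top => exact Set.finite_empty
  | bot => exact Set.finite_empty
  | nominal c => exact Set.finite_empty
  | neg C ih => exact ih
  | inter C D ihC ihD => exact ihC.union ihD
  | union C D ihC ihD => exact ihC.union ihD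
  | ex p C ih => exact (Set.finite_singleton _).union ih
  | all p C ih => exact (Set.finite_singleton _).union ih

lemma Axiom.roleNames_finite (a : Axiom) : a.roleNames.Finite := by
  cases a with
  | conceptIncl C D => exact (Concept.roleNames_finite C).union (Concept.roleNames_finite D)
  | roleIncl p q => exact (Set.finite_singleton _).insert _
  | funcAssert p => exact Set.finite_singleton _

lemma ontRoleNames_finite (O : Ontology) : (ontRoleNames O).Finite :=
  Set.Finite.biUnion O.finite_toSet (fun a _ => Axiom.roleNames_finite a)

/-- Role names can be eliminated from the finiteness signature:
`(O, Σ)` is a positive instance of MIXED-SAT iff `(O', {A} ∪ (Σ ∖ Σ'))` is, where `Σ'`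
is the set of role names in `Σ`, `A` is fresh, and
`O' = O ∪ {⊤ ⊑ ∀r.A, ⊤ ⊑ ∀r⁻.A : r ∈ Σ'}`. -/
theorem mixedSat_eliminate_roles
    (O : Ontology) (Sc Sr : Finset ℕ) (A : ℕ) (hA : A ∉ ontConceptNames O) :
    mixedSat O ↑Sc ↑Sr ↔
      mixedSat
        (O ∪ Sr.biUnion (fun r =>
          {Axiom.conceptIncl Concept.top (Concept.all (Role.name r) (Concept.atomic A)),
           Axiom.conceptIncl Concept.top (Concept.all (Role.inv r) (Concept.atomic A))}))
        (insert A ↑Sc) ∅ := by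
  constructor
  · rintro ⟨J, hM, hC, hR⟩
    set S : Set Const := ⋃ r ∈ (↑Sr : Set ℕ),
      (Prod.fst '' (Role.name r).interp J ∪ Prod.snd '' (Role.name r).interp J) with hSdef
    have hSfin : S.Finite :=
      Set.Finite.biUnion Sr.finite_toSet
        (fun r hr => ((hR r hr).image _).union ((hR r hr).image _))
    have hmemS : ∀ r ∈ Sr, ∀ c d : Const, Atom.roleAtom r c d ∈ J → c ∈ S ∧ d ∈ S := by
      intro r hr c d hcd
      constructor
      · exact Set.mem_biUnion hr (Or.inl ⟨(c, d), hcd, rfl⟩)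
      · exact Set.mem_biUnion hr (Or.inr ⟨(c, d), hcd, rfl⟩)
    have hSsub : S ⊆ adom J := by
      intro c hc
      simp only [hSdef, Set.mem_iUnion] at hc
      obtain ⟨r, hr, hc⟩ := hc
      rcases hc with ⟨⟨a, b⟩, hab, rfl⟩ | ⟨⟨a, b⟩, hab, rfl⟩
      · exact Or.inr (Or.inl ⟨r, b, hab⟩)
      · exact Or.inr (Or.inr ⟨r, a, hab⟩)
    obtain ⟨ρ, hρ⟩ :=
      (((ontRoleNames_finite O).union Sr.finite_toSet).infinite_compl).nonempty
    rw [Set.mem_compl_iff, Set.mem_union, not_or] at hρ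
    obtain ⟨hρO, hρS⟩ := hρ
    refine ⟨tr J A ρ S, ?_, ?_, ?_⟩
    · intro a ha
      rcases Finset.mem_union.1 ha with haO | haN
      · refine (satAx_tr hSsub a ?_ ?_).2 (hM a haO)
        · exact fun h => hA (Set.mem_iUnion₂.2 ⟨a, haO, h⟩)
        · exact fun h => hρO (Set.mem_iUnion₂.2 ⟨a, haO, h⟩)
      · simp only [Finset.mem_biUnion, Finset.mem_insert, Finset.mem_singleton] at haN
        obtain ⟨r, hr, rfl | rfl⟩ := haN
        · intro c hc
          have hc' : c ∈ adom J := by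
            rwa [show Concept.top.interp (tr J A ρ S) = adom (tr J A ρ S) from rfl,
              adom_tr hSsub] at hc
          have hrρ : (Role.name r).nameOf ≠ ρ := fun h => hρS (h ▸ hr)
          refine ⟨by rw [show adom (tr J A ρ S) = adom J from adom_tr hSsub]; exact hc', ?_⟩
          intro d hd
          rw [roleInterp_tr hrρ] at hd
          exact (mem_tr_concept A d).2 (Or.inr ⟨rfl, (hmemS r hr c d hd).2⟩)
        · intro c hc
          have hc' : c ∈ adom J := by
            rwa [show Concept.top.interp (tr J A ρ S) = adom (tr J A ρ S) from rfl,
              adom_tr hSsub] at hc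
          have hrρ : (Role.inv r).nameOf ≠ ρ := fun h => hρS (h ▸ hr)
          refine ⟨by rw [show adom (tr J A ρ S) = adom J from adom_tr hSsub]; exact hc', ?_⟩
          intro d hd
          rw [roleInterp_tr hrρ] at hd
          exact (mem_tr_concept A d).2 (Or.inr ⟨rfl, (hmemS r hr d c hd).1⟩)
    · intro B hB
      by_cases hBA : B = A
      · subst hBA
        refine hSfin.subset ?_
        intro c hc
        rcases (mem_tr_concept B c).1 hc with ⟨_, h⟩ | ⟨_, h⟩
        · exact absurd rfl h
        · exact h
      · have hBSc : B ∈ (↑Sc : Set ℕ) := (Set.mem_insert_iff.1 hB).resolve_left hBA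
        have heq : (Concept.atomic B).interp (tr J A ρ S) = (Concept.atomic B).interp J := by
          ext c
          simp only [Concept.interp, Set.mem_setOf_eq, mem_tr_concept]
          constructor
          · rintro (⟨h, -⟩ | ⟨h, -⟩)
            · exact h
            · exact absurd h hBA
          · exact fun h => Or.inl ⟨h, hBA⟩
        rw [heq]
        exact hC B hBSc
    · intro r hr
      exact absurd hr (Set.notMem_empty r)
  · rintro ⟨J, hM, hC, -⟩
    refine ⟨J, ?_, ?_, ?_⟩
    · intro a ha
      exact hM a (Finset.mem_union_left _ ha)
    · intro B hB
      exact hC B (Set.mem_insert_iff.2 (Or.inr hB))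
    · intro r hr
      have hr' : r ∈ Sr := hr
      have hAfin := hC A (Set.mem_insert _ _)
      have hax1 := hM (Axiom.conceptIncl Concept.top
          (Concept.all (Role.name r) (Concept.atomic A)))
        (Finset.mem_union_right _ (Finset.mem_biUnion.2 ⟨r, hr', by simp⟩))
      have hax2 := hM (Axiom.conceptIncl Concept.top
          (Concept.all (Role.inv r) (Concept.atomic A)))
        (Finset.mem_union_right _ (Finset.mem_biUnion.2 ⟨r, hr', by simp⟩))
      simp only [satisfiesAxiom] at hax1 hax2
      refine (hAfin.prod hAfin).subset ?_
      rintro ⟨c, d⟩ hcd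
      have hcd' : Atom.roleAtom r c d ∈ J := hcd
      have hcadom : c ∈ adom J := Or.inr (Or.inl ⟨r, d, hcd'⟩)
      have hdadom : d ∈ adom J := Or.inr (Or.inr ⟨r, c, hcd'⟩)
      exact ⟨(hax2 hdadom).2 c hcd', (hax1 hcadom).2 d hcd'⟩

end DLPaper
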